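/- Fix a permutation w ∈ S_n and i ∈ supp(w). Then i appears exactly once in every reduced word of w if and only if both of the following hold: (1) there is no occurrence of the pattern 321 in w with positions x_1 < x_2 < x_3 satisfying x_1 ≤ i < x_3 and values y_1 < y_2 < y_3 satisfying y_1 ≤ i < y_3; and (2) there is no occurrence of the pattern 3412 in w with positions x_1 < x_2 < x_3 < x_4 satisfying x_2 ≤ i < x_3 and values y_1 < y_2 < y_3 < y_4 satisfying y_2 ≤ i < y_3. -/

import Mathlib

/-- The adjacent transposition `σ_i`, swapping `i` and `i+1` (acting on `ℕ`). -/
def sigmaT (i : ℕ) : Equiv.Perm ℕ := Equiv.swap i (i + 1)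

/-- The permutation given by a word (product of simple reflections, composed as functions). -/
def wordProd (s : List ℕ) : Equiv.Perm ℕ := (s.map sigmaT).prod

/-- `s` is a word for `w` in `S_n`: all letters lie in `{1,…,n-1}` and the product is `w`. -/
def IsWord (n : ℕ) (w : Equiv.Perm ℕ) (s : List ℕ) : Prop :=
  (∀ j ∈ s, 1 ≤ j ∧ j ≤ n - 1) ∧ wordProd s = w

/-- `s` is a reduced word for `w`: a word of minimal length. -/
def IsReducedWord (n : ℕ) (w : Equiv.Perm ℕ) (s : List ℕ) : Prop :=
  IsWord n w s ∧ ∀ t : List ℕ, IsWord n w t → s.length ≤ t.length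

/-- The Coxeter length `ℓ(w)`. -/
noncomputable def ell (n : ℕ) (w : Equiv.Perm ℕ) : ℕ :=
  sInf {k | ∃ s : List ℕ, IsWord n w s ∧ s.length = k}

/-- The support of `w`: letters appearing in reduced words of `w`. -/
def supp (n : ℕ) (w : Equiv.Perm ℕ) : Set ℕ :=
  {i | ∃ s : List ℕ, IsReducedWord n w s ∧ i ∈ s}

/-- Bruhat order: some reduced word of `v` is a subsequence of some reduced word of `w`. -/
def BruhatLE (n : ℕ) (v w : Equiv.Perm ℕ) : Prop :=
  ∃ s t : List ℕ, IsReducedWord n v s ∧ IsReducedWord n w t ∧ s.Sublist t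

/-- The principal order ideal `B(w)`, as a type. -/
def IdealB (n : ℕ) (w : Equiv.Perm ℕ) : Type := {v : Equiv.Perm ℕ // BruhatLE n v w}

/-- The Bruhat order restricted to `B(w)`. -/
def IdealLE (n : ℕ) (w : Equiv.Perm ℕ) (a b : IdealB n w) : Prop := BruhatLE n a.1 b.1

/-- Two relations are isomorphic (order isomorphism of the corresponding ordered sets). -/
def RelIsomorphic {α β : Type*} (ra : α → α → Prop) (rb : β → β → Prop) : Prop :=
  ∃ e : α ≃ β, ∀ a b : α, ra a b ↔ rb (e a) (e b)

/-- `w` is a prism: `B(w) ≅ C₂ × X` for some partially ordered set `X`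
(the two-element chain `C₂` realized as `Bool`), with the componentwise order. -/
def IsPrism (n : ℕ) (w : Equiv.Perm ℕ) : Prop :=
  ∃ (X : Type) (rX : X → X → Prop), IsPartialOrder X rX ∧
    RelIsomorphic (IdealLE n w)
      (fun p q : Bool × X => (p.1 ≤ q.1) ∧ rX p.2 q.2)

/-- `w` belongs to `S_n`: it fixes every point outside `{1,…,n}`. -/
def MemSymm (n : ℕ) (w : Equiv.Perm ℕ) : Prop :=
  ∀ x : ℕ, x ∉ Set.Icc 1 n → w x = x

/-- `i` is unconfined in the word `s`: it appears exactly once, not between two copies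
of `i+1` and not between two copies of `i-1`. -/
def Unconfined (i : ℕ) (s : List ℕ) : Prop :=
  s.count i = 1 ∧ ∀ a b : List ℕ, s = a ++ i :: b →
    ¬((i + 1) ∈ a ∧ (i + 1) ∈ b) ∧ ¬((i - 1) ∈ a ∧ (i - 1) ∈ b)

/-- `B(w) ≅ C₂ × B(v)` with the componentwise order. -/
def IsoC2TimesIdeal (n : ℕ) (w v : Equiv.Perm ℕ) : Prop :=
  RelIsomorphic (IdealLE n w)
    (fun p q : Bool × IdealB n v => (p.1 ≤ q.1) ∧ IdealLE n v p.2 q.2)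

/-!
Let `L = lowCrossers w i` be the set of values `≤ i` that `w` places after position `i`, and
`H = highCrossers w i` the set of values `> i` that it places at positions `≤ i`; then
`#L = #H`. Right multiplication by `σ_i` moves at most one value from the positions `≤ i` to the
positions `> i`, so every word of `w` contains `i` at least `#L` times, and a word containing `i`
exactly once has `#L ≥ 1`. A straddling `3412` puts two values into `H`; conversely two elements
in each of `L` and `H` form a straddling `321` or `3412`.

It remains to treat `L = {α}`, `H = {β}`. Reduced words are maximal chains in the right weak
order, along which inversion sets grow one pair at a time. Unless there is a straddling `321`, the
first letter `i` of a reduced word swaps exactly `α` and `β`; afterwards the positions `≤ i` carry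
the same values as in `w`, so a second letter `i` would create an inversion that `w` lacks.
Conversely, a straddling `321` with middle value `q` yields a chain in the weak order that crosses
position `i` twice, swapping `q, β` and then `α, q` if `q ≤ i`, and `α, q` and then `q, β`
otherwise.
-/

open Finset

lemma sigmaT_mul_self (j : ℕ) : sigmaT j * sigmaT j = 1 := Equiv.swap_mul_self _ _

lemma sigmaT_inv (j : ℕ) : (sigmaT j)⁻¹ = sigmaT j := Equiv.swap_inv _ _

lemma sigmaT_apply_le_iff_of_ne {i j x : ℕ} (hj : j ≠ i) : sigmaT j x ≤ i ↔ x ≤ i := by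
  unfold sigmaT
  rw [Equiv.swap_apply_def]
  split_ifs <;> omega

lemma wordProd_cons (j : ℕ) (s : List ℕ) : wordProd (j :: s) = sigmaT j * wordProd s := by
  simp [wordProd]

lemma wordProd_append (s t : List ℕ) : wordProd (s ++ t) = wordProd s * wordProd t := by
  simp [wordProd]

lemma wordProd_singleton (j : ℕ) : wordProd [j] = sigmaT j := by
  simp [wordProd]

lemma wordProd_inv_apply_le_iff_of_notMem {i : ℕ} {s : List ℕ} (hs : i ∉ s) (x : ℕ) :
    (wordProd s)⁻¹ x ≤ i ↔ x ≤ i := by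
  induction s generalizing x with
  | nil => rfl
  | cons j t ih =>
    rw [List.mem_cons, not_or] at hs
    rw [wordProd_cons, mul_inv_rev, Equiv.Perm.mul_apply, sigmaT_inv, ih hs.2,
      sigmaT_apply_le_iff_of_ne (Ne.symm hs.1)]

lemma wordProd_append_cons_inv_apply_le_iff {i : ℕ} {p r : List ℕ} (hp : i ∉ p) (hr : i ∉ r)
    (z : ℕ) :
    (wordProd (p ++ i :: r))⁻¹ z ≤ i ↔ (z ≤ i ∧ z ≠ wordProd p i) ∨ z = wordProd p (i + 1) := by
  have h₁ := wordProd_inv_apply_le_iff_of_notMem hp z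
  have h₂ : (wordProd p)⁻¹ z = i ↔ z = wordProd p i := Equiv.Perm.inv_eq_iff_eq
  have h₃ : (wordProd p)⁻¹ z = i + 1 ↔ z = wordProd p (i + 1) := Equiv.Perm.inv_eq_iff_eq
  rw [wordProd_append, wordProd_cons, mul_inv_rev, mul_inv_rev, Equiv.Perm.mul_apply,
    Equiv.Perm.mul_apply, wordProd_inv_apply_le_iff_of_notMem hr, sigmaT_inv, sigmaT,
    Equiv.swap_apply_def]
  split_ifs <;> omega

namespace MemSymm

variable {n : ℕ} {u v w : Equiv.Perm ℕ}

lemma one : MemSymm n 1 := fun _ _ => rfl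

lemma mul (hu : MemSymm n u) (hv : MemSymm n v) : MemSymm n (u * v) := fun x hx => by
  rw [Equiv.Perm.mul_apply, hv x hx, hu x hx]

lemma inv (hu : MemSymm n u) : MemSymm n u⁻¹ := fun x hx => by
  rw [Equiv.Perm.inv_eq_iff_eq, hu x hx]

lemma apply_of_notMem (hu : MemSymm n u) {x : ℕ} (hx : x ∉ Icc 1 n) : u x = x :=
  hu x (by simpa using hx)

lemma apply_mem_Icc_iff (hu : MemSymm n u) {x : ℕ} : u x ∈ Icc 1 n ↔ x ∈ Icc 1 n := by
  refine ⟨fun h => ?_, fun h => ?_⟩ <;> by_contra hx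
  · exact hx (hu.apply_of_notMem hx ▸ h)
  · exact (u.injective (hu.apply_of_notMem hx) ▸ hx) h

lemma inv_apply_bounds (hw : MemSymm n w) {x : ℕ} (hx : x ∈ Icc 1 n) :
    1 ≤ w⁻¹ x ∧ w⁻¹ x ≤ n :=
  mem_Icc.1 (hw.inv.apply_mem_Icc_iff.2 hx)

lemma mem_Icc_of_inv_apply_ne (hw : MemSymm n w) {z : ℕ} (h : w⁻¹ z ≠ z) :
    z ∈ Icc 1 n ∧ w⁻¹ z ∈ Icc 1 n := by
  have hz : z ∈ Icc 1 n := by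
    by_contra hz
    exact h (hw.inv.apply_of_notMem hz)
  exact ⟨hz, hw.inv.apply_mem_Icc_iff.2 hz⟩

end MemSymm

lemma memSymm_sigmaT {n j : ℕ} (h1 : 1 ≤ j) (h2 : j < n) : MemSymm n (sigmaT j) := by
  intro x hx
  simp only [Set.mem_Icc, not_and_or, not_le] at hx
  apply Equiv.swap_apply_of_ne_of_ne <;> omega

lemma memSymm_wordProd {n : ℕ} {s : List ℕ} (hs : ∀ j ∈ s, 1 ≤ j ∧ j ≤ n - 1) :
    MemSymm n (wordProd s) := by
  induction s with
  | nil => exact MemSymm.one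
  | cons j t ih =>
    rw [wordProd_cons]
    have hj := hs j List.mem_cons_self
    exact (memSymm_sigmaT hj.1 (by omega)).mul (ih fun m hm => hs m (List.mem_cons_of_mem j hm))

def inversions (n : ℕ) (w : Equiv.Perm ℕ) : Finset (ℕ × ℕ) :=
  (Icc 1 n ×ˢ Icc 1 n).filter fun p => p.1 < p.2 ∧ w⁻¹ p.2 < w⁻¹ p.1

def IsSortedBy (n : ℕ) (u : Equiv.Perm ℕ) (key : ℕ → ℕ) : Prop :=
  ∀ x ∈ Icc 1 n, ∀ y ∈ Icc 1 n, u⁻¹ x < u⁻¹ y ↔ key x < key y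

section Inversions

variable {n j : ℕ} {u w : Equiv.Perm ℕ}

lemma mem_inversions {x y : ℕ} :
    (x, y) ∈ inversions n w ↔ x ∈ Icc 1 n ∧ y ∈ Icc 1 n ∧ x < y ∧ w⁻¹ y < w⁻¹ x := by
  simp [inversions, and_assoc]

lemma MemSymm.mem_inversions_iff (hw : MemSymm n w) {x y : ℕ} :
    (x, y) ∈ inversions n w ↔ x < y ∧ w⁻¹ y < w⁻¹ x := by
  rw [mem_inversions]
  refine ⟨fun h => h.2.2, fun h => ?_⟩
  have key : ∀ z, (z ∈ Icc 1 n ∧ w⁻¹ z ∈ Icc 1 n) ∨ (z ∉ Icc 1 n ∧ w⁻¹ z = z) := fun z => by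
    by_cases hz : z ∈ Icc 1 n
    · exact Or.inl ⟨hz, hw.inv.apply_mem_Icc_iff.2 hz⟩
    · exact Or.inr ⟨hz, hw.inv.apply_of_notMem hz⟩
  have hx := key x
  have hy := key y
  simp only [mem_Icc] at hx hy ⊢
  omega

lemma inversions_one : inversions n 1 = ∅ := by
  ext ⟨x, y⟩
  simp only [mem_inversions, inv_one, Equiv.Perm.one_apply, notMem_empty, iff_false]
  omega

lemma inv_apply_lt_inv_apply_iff {x y : ℕ} (hx : x ∈ Icc 1 n) (hy : y ∈ Icc 1 n) :
    u⁻¹ x < u⁻¹ y ↔ (x < y ∧ (x, y) ∉ inversions n u) ∨ (y < x ∧ (y, x) ∈ inversions n u) := by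
  have : u⁻¹ x ≠ u⁻¹ y ↔ x ≠ y := u⁻¹.injective.ne_iff
  simp only [mem_inversions, hx, hy, true_and]
  omega

lemma inversions_mul_sigmaT (hu : MemSymm n u) (hj : 1 ≤ j) (hjn : j < n)
    (h : u j < u (j + 1)) :
    inversions n (u * sigmaT j) = insert (u j, u (j + 1)) (inversions n u) := by
  ext ⟨x, y⟩
  obtain ⟨p, rfl⟩ := u.surjective x
  obtain ⟨q, rfl⟩ := u.surjective y
  rw [(hu.mul (memSymm_sigmaT hj hjn)).mem_inversions_iff, mem_insert, hu.mem_inversions_iff,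
    Prod.mk.injEq, u.injective.eq_iff, u.injective.eq_iff]
  simp only [mul_inv_rev, Equiv.Perm.mul_apply, Equiv.Perm.coe_inv, Equiv.symm_apply_apply, sigmaT,
    Equiv.swap_inv, Equiv.swap_apply_def]
  split_ifs <;> subst_vars <;> omega

lemma card_inversions_mul_sigmaT (hu : MemSymm n u) (hj : 1 ≤ j) (hjn : j < n)
    (h : u j < u (j + 1)) :
    #(inversions n (u * sigmaT j)) = #(inversions n u) + 1 := by
  rw [inversions_mul_sigmaT hu hj hjn h, card_insert_of_notMem]
  simp [hu.mem_inversions_iff]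

lemma card_inversions_mul_sigmaT_of_gt (hu : MemSymm n u) (hj : 1 ≤ j) (hjn : j < n)
    (h : u (j + 1) < u j) :
    #(inversions n (u * sigmaT j)) + 1 = #(inversions n u) := by
  have := card_inversions_mul_sigmaT (hu.mul (memSymm_sigmaT hj hjn)) hj hjn
    (by simpa [sigmaT] using h)
  rwa [mul_assoc, sigmaT_mul_self, mul_one, eq_comm] at this

end Inversions

section Sorting

variable {n : ℕ} {u v w : Equiv.Perm ℕ} {key key' : ℕ → ℕ}

lemma MemSymm.inv_apply_eq_card (hu : MemSymm n u) {x : ℕ} (hx : x ∈ Icc 1 n) :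
    u⁻¹ x = #{y ∈ Icc 1 n | u⁻¹ y ≤ u⁻¹ x} := by
  have hx' := hu.inv.apply_mem_Icc_iff.2 hx
  have : {y ∈ Icc 1 n | u⁻¹ y ≤ u⁻¹ x} = (Icc 1 (u⁻¹ x)).map u.toEmbedding := by
    ext y
    have hy := hu.inv.apply_mem_Icc_iff (x := y)
    simp only [mem_filter, mem_map_equiv, ← Equiv.Perm.inv_def, mem_Icc] at hx' hy ⊢
    omega
  rw [this, card_map, Nat.card_Icc, Nat.add_sub_cancel]

lemma IsSortedBy.inv_apply_eq_card (h : IsSortedBy n u key) (hu : MemSymm n u) {x : ℕ}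
    (hx : x ∈ Icc 1 n) : u⁻¹ x = #{y ∈ Icc 1 n | key y ≤ key x} := by
  rw [hu.inv_apply_eq_card hx]
  congr 1
  refine filter_congr fun y hy => ?_
  rw [← not_lt, ← not_lt, h x hx y hy]

lemma IsSortedBy.eq (hu : MemSymm n u) (hv : MemSymm n v) (h : IsSortedBy n u key)
    (h' : IsSortedBy n v key) : u = v := by
  rw [← inv_inj]
  ext x
  by_cases hx : x ∈ Icc 1 n
  · rw [h.inv_apply_eq_card hu hx, h'.inv_apply_eq_card hv hx]
  · rw [hu.inv.apply_of_notMem hx, hv.inv.apply_of_notMem hx]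

lemma card_filter_key_le_lt {x y : ℕ} (hy : y ∈ Icc 1 n) (h : key x < key y) :
    #{z ∈ Icc 1 n | key z ≤ key x} < #{z ∈ Icc 1 n | key z ≤ key y} := by
  refine card_lt_card ((ssubset_iff_of_subset ?_).2 ⟨y, ?_, ?_⟩)
  · intro z
    simp only [mem_filter]
    exact fun ⟨hz, hk⟩ => ⟨hz, hk.trans h.le⟩
  · simp [hy]
  · simp [h]

lemma exists_isSortedBy (hkey : Set.InjOn key (Icc 1 n)) :
    ∃ u, MemSymm n u ∧ IsSortedBy n u key := by
  set rank : ℕ → ℕ := fun x => #{z ∈ Icc 1 n | key z ≤ key x}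
  have rank_mem : ∀ x ∈ Icc 1 n, rank x ∈ Icc 1 n := fun x hx => by
    simp only [mem_Icc, rank]
    refine ⟨card_pos.2 ⟨x, by simp [hx]⟩, ?_⟩
    simpa using card_filter_le (Icc 1 n) _
  have rank_inj : ∀ x ∈ Icc 1 n, ∀ y ∈ Icc 1 n, rank x = rank y → x = y := by
    intro x hx y hy hxy
    by_contra hne
    rcases lt_or_gt_of_ne (hkey.ne hx hy hne) with h | h
    · exact (card_filter_key_le_lt hy h).ne hxy
    · exact (card_filter_key_le_lt hx h).ne' hxy
  set f : ℕ → ℕ := fun x => if x ∈ Icc 1 n then rank x else x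
  have hf : f.Bijective := by
    refine ⟨fun x y hxy => ?_, fun y => ?_⟩
    · by_cases hx : x ∈ Icc 1 n <;> by_cases hy : y ∈ Icc 1 n <;>
        simp only [f, hx, hy, if_true, if_false] at hxy
      · exact rank_inj x hx y hy hxy
      · exact absurd (hxy ▸ rank_mem x hx) hy
      · exact absurd (hxy ▸ rank_mem y hy) hx
      · exact hxy
    · by_cases hy : y ∈ Icc 1 n
      · obtain ⟨x, hx, rfl⟩ := surj_on_of_inj_on_of_card_le (fun x _ => rank x) rank_mem
          (fun a b ha hb => rank_inj a ha b hb) le_rfl y hy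
        exact ⟨x, if_pos hx⟩
      · exact ⟨y, if_neg hy⟩
  refine ⟨(Equiv.ofBijective f hf)⁻¹, fun x hx => ?_, fun x hx y hy => ?_⟩
  · rw [Equiv.Perm.inv_eq_iff_eq, Equiv.ofBijective_apply]
    exact (if_neg (by simpa using hx)).symm
  · simp only [inv_inv, Equiv.ofBijective_apply, f, hx, hy, if_true]
    refine ⟨fun h => ?_, fun h => card_filter_key_le_lt hy h⟩
    by_contra hle
    rcases (not_lt.1 hle).lt_or_eq with hlt | heq
    · exact (card_filter_key_le_lt hx hlt).not_gt h
    · exact h.ne (congrArg rank (hkey hy hx heq)).symm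

lemma mem_inversions_of_isSortedBy (h : IsSortedBy n u key) {x y : ℕ} :
    (x, y) ∈ inversions n u ↔ x ∈ Icc 1 n ∧ y ∈ Icc 1 n ∧ x < y ∧ key y < key x := by
  rw [mem_inversions]
  constructor
  · rintro ⟨hx, hy, hxy, hlt⟩
    exact ⟨hx, hy, hxy, (h y hy x hx).1 hlt⟩
  · rintro ⟨hx, hy, hxy, hlt⟩
    exact ⟨hx, hy, hxy, (h y hy x hx).2 hlt⟩

lemma inversions_subset_of_isSortedBy (h : IsSortedBy n u key) (h' : IsSortedBy n v key')
    (hkey : ∀ x ∈ Icc 1 n, ∀ y ∈ Icc 1 n, x < y → key y < key x → key' y < key' x) :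
    inversions n u ⊆ inversions n v := by
  rintro ⟨x, y⟩ hxy
  obtain ⟨hx, hy, hlt, hk⟩ := (mem_inversions_of_isSortedBy h).1 hxy
  exact (mem_inversions_of_isSortedBy h').2 ⟨hx, hy, hlt, hkey x hx y hy hlt hk⟩

lemma isSortedBy_inv (w : Equiv.Perm ℕ) : IsSortedBy n w ⇑w⁻¹ := fun _ _ _ _ => Iff.rfl

lemma eq_of_inversions_eq (hu : MemSymm n u) (hw : MemSymm n w)
    (h : inversions n u = inversions n w) : u = w :=
  IsSortedBy.eq hu hw (fun x hx y hy => by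
    rw [inv_apply_lt_inv_apply_iff hx hy, h, ← inv_apply_lt_inv_apply_iff hx hy]) (isSortedBy_inv w)

end Sorting

section Length

variable {n : ℕ} {u w : Equiv.Perm ℕ}

lemma exists_ascent_mem_inversions (hu : MemSymm n u) (hw : MemSymm n w)
    (h : inversions n u ⊆ inversions n w) (hne : u ≠ w) :
    ∃ j, 1 ≤ j ∧ j < n ∧ (u j, u (j + 1)) ∈ inversions n w := by
  -- Otherwise `w⁻¹ * u` increases at every step on `[1, n]`, so it is the identity.
  by_contra! hasc
  have step : ∀ j, 1 ≤ j → j < n → w⁻¹ (u j) < w⁻¹ (u (j + 1)) := by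
    intro j hj hjn
    rcases lt_or_gt_of_ne (u.injective.ne (by omega : j ≠ j + 1)) with hlt | hgt
    · have hne' : w⁻¹ (u j) ≠ w⁻¹ (u (j + 1)) := (w⁻¹ * u).injective.ne (by omega)
      have := hasc j hj hjn
      rw [hw.mem_inversions_iff, not_and, not_lt] at this
      exact (this hlt).lt_of_ne hne'
    · have : (u (j + 1), u j) ∈ inversions n u := hu.mem_inversions_iff.2 ⟨hgt, by simp⟩
      exact (hw.mem_inversions_iff.1 (h this)).2
  have hmono : StrictMonoOn (w⁻¹ * u) (Set.Icc 1 n) :=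
    strictMonoOn_of_lt_succ Set.ordConnected_Icc fun j _ hj hj' => by
      simp only [Order.succ_eq_add_one, Set.mem_Icc] at hj hj'
      exact step j hj.1 (by omega)
  have hsorted : IsSortedBy n (w⁻¹ * u)⁻¹ id := fun x hx y hy => by
    rw [inv_inv]
    exact hmono.lt_iff_lt (by simpa using hx) (by simpa using hy)
  have := IsSortedBy.eq (hw.inv.mul hu).inv MemSymm.one hsorted (fun _ _ _ _ => Iff.rfl)
  rw [inv_eq_one, inv_mul_eq_one] at this
  exact hne this.symm

lemma card_inversions_mul_sigmaT_le (hu : MemSymm n u) {j : ℕ} (hj : 1 ≤ j) (hjn : j < n) :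
    #(inversions n (u * sigmaT j)) ≤ #(inversions n u) + 1 := by
  rcases lt_or_gt_of_ne (u.injective.ne (by omega : j ≠ j + 1)) with h | h
  · exact (card_inversions_mul_sigmaT hu hj hjn h).le
  · have := card_inversions_mul_sigmaT_of_gt hu hj hjn h
    omega

lemma card_inversions_mul_wordProd_le (hu : MemSymm n u) {s : List ℕ}
    (hs : ∀ j ∈ s, 1 ≤ j ∧ j ≤ n - 1) :
    #(inversions n (u * wordProd s)) ≤ #(inversions n u) + s.length := by
  induction s generalizing u with
  | nil => simp [wordProd]
  | cons j t ih =>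
    have hj := hs j List.mem_cons_self
    have := ih (hu.mul (memSymm_sigmaT hj.1 (by omega)))
      fun m hm => hs m (List.mem_cons_of_mem j hm)
    have := card_inversions_mul_sigmaT_le hu hj.1 (by omega : j < n)
    rw [wordProd_cons, ← mul_assoc, List.length_cons]
    omega

lemma inversions_subset_mul_wordProd (hu : MemSymm n u) {s : List ℕ}
    (hs : ∀ j ∈ s, 1 ≤ j ∧ j ≤ n - 1)
    (h : #(inversions n (u * wordProd s)) = #(inversions n u) + s.length) :
    inversions n u ⊆ inversions n (u * wordProd s) := by
  induction s generalizing u with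
  | nil => simp [wordProd]
  | cons j t ih =>
    have hj := hs j List.mem_cons_self
    have hjn : j < n := by omega
    have ht : ∀ m ∈ t, 1 ≤ m ∧ m ≤ n - 1 := fun m hm => hs m (List.mem_cons_of_mem j hm)
    have hu' := hu.mul (memSymm_sigmaT hj.1 hjn)
    rw [wordProd_cons, ← mul_assoc] at h ⊢
    rw [List.length_cons] at h
    have hle := card_inversions_mul_wordProd_le hu' ht
    rcases lt_or_gt_of_ne (u.injective.ne (by omega : j ≠ j + 1)) with hlt | hgt
    · have hc := card_inversions_mul_sigmaT hu hj.1 hjn hlt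
      refine subset_trans ?_ (ih hu' ht (by omega))
      rw [inversions_mul_sigmaT hu hj.1 hjn hlt]
      exact subset_insert _ _
    · have := card_inversions_mul_sigmaT_of_gt hu hj.1 hjn hgt
      omega

lemma exists_word_of_inversions_subset (hu : MemSymm n u) (hw : MemSymm n w)
    (h : inversions n u ⊆ inversions n w) :
    ∃ s : List ℕ, (∀ j ∈ s, 1 ≤ j ∧ j ≤ n - 1) ∧ u * wordProd s = w ∧
      #(inversions n u) + s.length = #(inversions n w) := by
  obtain ⟨k, hk⟩ := Nat.exists_eq_add_of_le (card_le_card h)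
  induction k generalizing u with
  | zero =>
    refine ⟨[], by simp, ?_, by simpa using hk.symm⟩
    simpa [wordProd] using eq_of_inversions_eq hu hw (eq_of_subset_of_card_le h hk.le)
  | succ k ih =>
    obtain ⟨j, hj, hjn, hmem⟩ := exists_ascent_mem_inversions hu hw h (by rintro rfl; omega)
    have hlt := (hw.mem_inversions_iff.1 hmem).1
    have hcard := card_inversions_mul_sigmaT hu hj hjn hlt
    have hsub : inversions n (u * sigmaT j) ⊆ inversions n w := by
      rw [inversions_mul_sigmaT hu hj hjn hlt]
      exact insert_subset hmem h
    obtain ⟨s, hs, hprod, hlen⟩ := ih (hu.mul (memSymm_sigmaT hj hjn)) hsub (by omega)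
    refine ⟨j :: s, ?_, by rwa [wordProd_cons, ← mul_assoc], ?_⟩
    · simp only [List.mem_cons, forall_eq_or_imp]
      exact ⟨⟨hj, by omega⟩, hs⟩
    · rw [List.length_cons]
      omega

lemma card_inversions_le_length {s : List ℕ} (hs : IsWord n w s) :
    #(inversions n w) ≤ s.length := by
  simpa [hs.2, inversions_one] using card_inversions_mul_wordProd_le (MemSymm.one (n := n)) hs.1

lemma exists_isWord_length_eq (hw : MemSymm n w) :
    ∃ s, IsWord n w s ∧ s.length = #(inversions n w) := by
  obtain ⟨s, hs, hprod, hlen⟩ :=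
    exists_word_of_inversions_subset MemSymm.one hw (by simp [inversions_one])
  exact ⟨s, ⟨hs, by simpa using hprod⟩, by simpa [inversions_one] using hlen⟩

lemma isReducedWord_iff (hw : MemSymm n w) {s : List ℕ} :
    IsReducedWord n w s ↔ IsWord n w s ∧ s.length = #(inversions n w) := by
  obtain ⟨t, ht, htlen⟩ := exists_isWord_length_eq hw
  refine ⟨fun h => ⟨h.1, ?_⟩, fun h => ⟨h.1, fun t ht => h.2 ▸ card_inversions_le_length ht⟩⟩
  exact le_antisymm (htlen ▸ h.2 t ht) (card_inversions_le_length h.1)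

lemma exists_isReducedWord (hw : MemSymm n w) : ∃ s, IsReducedWord n w s := by
  obtain ⟨s, hs, hlen⟩ := exists_isWord_length_eq hw
  exact ⟨s, (isReducedWord_iff hw).2 ⟨hs, hlen⟩⟩

lemma IsReducedWord.inversions_prefix (hw : MemSymm n w) {p r : List ℕ}
    (hs : IsReducedWord n w (p ++ r)) :
    inversions n (wordProd p) ⊆ inversions n w ∧ #(inversions n (wordProd p)) = p.length := by
  obtain ⟨⟨hl, hprod⟩, hlen⟩ := (isReducedWord_iff hw).1 hs
  have hp : ∀ j ∈ p, 1 ≤ j ∧ j ≤ n - 1 := fun j hj => hl j (List.mem_append_left r hj)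
  have hr : ∀ j ∈ r, 1 ≤ j ∧ j ≤ n - 1 := fun j hj => hl j (List.mem_append_right p hj)
  have hu := memSymm_wordProd hp
  have h1 := card_inversions_le_length (w := wordProd p) ⟨hp, rfl⟩
  have h2 := card_inversions_mul_wordProd_le hu hr
  rw [← wordProd_append, hprod] at h2
  rw [List.length_append] at hlen
  refine ⟨?_, by omega⟩
  have := inversions_subset_mul_wordProd hu hr (by rw [← wordProd_append, hprod]; omega)
  rwa [← wordProd_append, hprod] at this

lemma IsReducedWord.mem_inversions_of_eq_append (hw : MemSymm n w) {p r : List ℕ} {j : ℕ}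
    (hs : IsReducedWord n w (p ++ j :: r)) :
    (wordProd p j, wordProd p (j + 1)) ∈ inversions n w ∧
      inversions n (wordProd p) ⊆ inversions n w := by
  have hj := hs.1.1 j (by simp)
  have hu := memSymm_wordProd fun m hm => hs.1.1 m (List.mem_append_left _ hm)
  have h1 := hs.inversions_prefix hw
  have h2 := IsReducedWord.inversions_prefix hw (p := p ++ [j]) (r := r) (by simpa using hs)
  rw [wordProd_append, wordProd_singleton, List.length_append, List.length_singleton] at h2
  rcases lt_or_gt_of_ne ((wordProd p).injective.ne (by omega : j ≠ j + 1)) with hlt | hgt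
  · rw [inversions_mul_sigmaT hu hj.1 (by omega) hlt] at h2
    exact ⟨h2.1 (mem_insert_self _ _), h1.1⟩
  · have := card_inversions_mul_sigmaT_of_gt hu hj.1 (by omega) hgt
    omega

end Length

def lowCrossers (w : Equiv.Perm ℕ) (i : ℕ) : Finset ℕ :=
  (range (i + 1)).filter fun v => i < w⁻¹ v

def highCrossers (w : Equiv.Perm ℕ) (i : ℕ) : Finset ℕ :=
  ((range (i + 1)).image w).filter fun v => i < v

section Crossers

variable {i j v : ℕ} {u w : Equiv.Perm ℕ}

@[simp]
lemma mem_lowCrossers : v ∈ lowCrossers w i ↔ v ≤ i ∧ i < w⁻¹ v := by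
  simp [lowCrossers]

lemma mem_image_range_succ_iff : v ∈ (range (i + 1)).image w ↔ w⁻¹ v ≤ i := by
  simp only [mem_image, mem_range, Nat.lt_succ_iff]
  exact ⟨by rintro ⟨x, hx, rfl⟩; simpa using hx, fun h => ⟨w⁻¹ v, h, by simp⟩⟩

@[simp]
lemma mem_highCrossers : v ∈ highCrossers w i ↔ i < v ∧ w⁻¹ v ≤ i := by
  rw [highCrossers, mem_filter, mem_image_range_succ_iff, and_comm]

lemma card_lowCrossers_eq_card_highCrossers (w : Equiv.Perm ℕ) (i : ℕ) :
    #(lowCrossers w i) = #(highCrossers w i) := by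
  have himage := card_filter_add_card_filter_not (s := (range (i + 1)).image w) (· ≤ i)
  have hrange := card_filter_add_card_filter_not (s := range (i + 1)) (fun v => i < w⁻¹ v)
  have hstay : ((range (i + 1)).image w).filter (· ≤ i) =
      (range (i + 1)).filter (fun v => ¬ i < w⁻¹ v) := by
    ext v
    simp only [mem_filter, mem_image_range_succ_iff, mem_range]
    omega
  rw [card_image_of_injective _ w.injective, hstay] at himage
  simp only [not_le] at himage
  rw [lowCrossers, highCrossers]
  omega

lemma lowCrossers_mul_sigmaT_of_ne (hj : j ≠ i) :
    lowCrossers (u * sigmaT j) i = lowCrossers u i := by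
  ext v
  simp only [mem_lowCrossers, mul_inv_rev, sigmaT_inv, Equiv.Perm.mul_apply, ← not_le,
    sigmaT_apply_le_iff_of_ne hj]

lemma lowCrossers_mul_sigmaT_subset :
    lowCrossers (u * sigmaT i) i ⊆ insert (u i) (lowCrossers u i) := by
  intro v hv
  rw [mem_lowCrossers, mul_inv_rev, sigmaT_inv, Equiv.Perm.mul_apply] at hv
  rw [mem_insert, mem_lowCrossers]
  by_cases h : u⁻¹ v = i
  · exact Or.inl (by rw [← h]; simp)
  · refine Or.inr ⟨hv.1, ?_⟩
    have := hv.2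
    rw [sigmaT, Equiv.swap_apply_def] at this
    split_ifs at this <;> omega

lemma card_lowCrossers_le_count (s : List ℕ) : #(lowCrossers (wordProd s) i) ≤ s.count i := by
  induction s using List.reverseRecOn with
  | nil => simp [wordProd, lowCrossers]
  | append_singleton t j ih =>
    rw [wordProd_append, wordProd_singleton, List.count_append]
    by_cases hj : j = i
    · subst hj
      have := card_le_card (lowCrossers_mul_sigmaT_subset (u := wordProd t) (i := j))
      have := card_insert_le (wordProd t j) (lowCrossers (wordProd t) j)
      rw [List.count_singleton_self]
      omega
    · rw [lowCrossers_mul_sigmaT_of_ne hj]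
      exact ih.trans (Nat.le_add_right _ _)

lemma highCrossers_nonempty_of_count_eq_one {s : List ℕ} (hs : s.count i = 1) :
    (highCrossers (wordProd s) i).Nonempty := by
  obtain ⟨p, r, rfl, hp⟩ :=
    List.eq_append_cons_of_mem (List.count_pos_iff.1 (by omega : 0 < s.count i))
  have hr : i ∉ r := by
    rw [← List.count_eq_zero]
    simp only [List.count_append, List.count_cons_self, List.count_eq_zero.2 hp] at hs
    omega
  have hb := wordProd_inv_apply_le_iff_of_notMem hp (wordProd p (i + 1))
  rw [Equiv.Perm.inv_eq_iff_eq.2 rfl] at hb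
  exact ⟨_, mem_highCrossers.2
    ⟨by omega, (wordProd_append_cons_inv_apply_le_iff hp hr _).2 (Or.inr rfl)⟩⟩

lemma lowCrossers_nonempty_iff : (lowCrossers w i).Nonempty ↔ (highCrossers w i).Nonempty := by
  rw [← card_pos, ← card_pos, card_lowCrossers_eq_card_highCrossers]

lemma crossers_eq_singleton_of_card_le_one {α β : ℕ} (hα : α ∈ lowCrossers w i)
    (hβ : β ∈ highCrossers w i) (h : #(lowCrossers w i) ≤ 1) :
    lowCrossers w i = {α} ∧ highCrossers w i = {β} := by
  rw [card_lowCrossers_eq_card_highCrossers] at h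
  exact ⟨eq_singleton_iff_unique_mem.2 ⟨hα, fun x hx => card_le_one.1
      ((card_lowCrossers_eq_card_highCrossers w i).trans_le h) x hx α hα⟩,
    eq_singleton_iff_unique_mem.2 ⟨hβ, fun x hx => card_le_one.1 h x hx β hβ⟩⟩

lemma inv_apply_le_iff_of_crossers_eq {α β z : ℕ} (hL : lowCrossers w i = {α})
    (hH : highCrossers w i = {β}) : w⁻¹ z ≤ i ↔ (z ≤ i ∧ z ≠ α) ∨ z = β := by
  have hα : z ∈ lowCrossers w i ↔ z = α := by rw [hL, mem_singleton]
  have hβ : z ∈ highCrossers w i ↔ z = β := by rw [hH, mem_singleton]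
  rw [mem_lowCrossers] at hα
  rw [mem_highCrossers] at hβ
  omega

end Crossers

def Straddles321 (n : ℕ) (w : Equiv.Perm ℕ) (i : ℕ) : Prop :=
  ∃ x1 x2 x3 : ℕ, 1 ≤ x1 ∧ x1 < x2 ∧ x2 < x3 ∧ x3 ≤ n ∧
    x1 ≤ i ∧ i < x3 ∧
    w x3 < w x2 ∧ w x2 < w x1 ∧ w x3 ≤ i ∧ i < w x1

def Straddles3412 (n : ℕ) (w : Equiv.Perm ℕ) (i : ℕ) : Prop :=
  ∃ x1 x2 x3 x4 : ℕ, 1 ≤ x1 ∧ x1 < x2 ∧ x2 < x3 ∧ x3 < x4 ∧ x4 ≤ n ∧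
    x2 ≤ i ∧ i < x3 ∧
    w x3 < w x4 ∧ w x4 < w x1 ∧ w x1 < w x2 ∧ w x4 ≤ i ∧ i < w x1

section Patterns

variable {n i : ℕ} {w : Equiv.Perm ℕ}

lemma straddles321_of_mem (hw : MemSymm n w) {α q β : ℕ} (hα : α ∈ lowCrossers w i)
    (hβ : β ∈ highCrossers w i) (hαq : α < q) (hqβ : q < β) (hβq : w⁻¹ β < w⁻¹ q)
    (hqα : w⁻¹ q < w⁻¹ α) : Straddles321 n w i := by
  rw [mem_lowCrossers] at hα
  rw [mem_highCrossers] at hβ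
  have hαI := (hw.mem_Icc_of_inv_apply_ne (z := α) (by omega)).2
  have hβI := (hw.mem_Icc_of_inv_apply_ne (z := β) (by omega)).2
  have e : ∀ z, w (w⁻¹ z) = z := fun z => by simp
  refine ⟨w⁻¹ β, w⁻¹ q, w⁻¹ α, ?_⟩
  simp only [e]
  simp only [mem_Icc] at hαI hβI
  omega

lemma straddles3412_of_mem (hw : MemSymm n w) {l₁ l₂ g₁ g₂ : ℕ} (hl₁ : l₁ ∈ lowCrossers w i)
    (hl₂ : l₂ ∈ lowCrossers w i) (hg₁ : g₁ ∈ highCrossers w i) (hg₂ : g₂ ∈ highCrossers w i)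
    (hl : l₁ < l₂) (hg : g₁ < g₂) (hlpos : w⁻¹ l₁ < w⁻¹ l₂) (hgpos : w⁻¹ g₁ < w⁻¹ g₂) :
    Straddles3412 n w i := by
  simp only [mem_lowCrossers, mem_highCrossers] at hl₁ hl₂ hg₁ hg₂
  have hl₂I := (hw.mem_Icc_of_inv_apply_ne (z := l₂) (by omega)).2
  have hg₁I := (hw.mem_Icc_of_inv_apply_ne (z := g₁) (by omega)).2
  have e : ∀ z, w (w⁻¹ z) = z := fun z => by simp
  refine ⟨w⁻¹ g₁, w⁻¹ g₂, w⁻¹ l₁, w⁻¹ l₂, ?_⟩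
  simp only [e]
  simp only [mem_Icc] at hl₂I hg₁I
  omega

lemma straddles_of_two_le_card_lowCrossers (hw : MemSymm n w) (h : 2 ≤ #(lowCrossers w i)) :
    Straddles321 n w i ∨ Straddles3412 n w i := by
  have hL : 1 < #(lowCrossers w i) := h
  have hH : 1 < #(highCrossers w i) := card_lowCrossers_eq_card_highCrossers w i ▸ hL
  have hl := min'_lt_max'_of_card _ hL
  have hg := min'_lt_max'_of_card _ hH
  have hl₁ := min'_mem _ (card_pos.1 (by omega : 0 < #(lowCrossers w i)))
  have hl₂ := max'_mem _ (card_pos.1 (by omega : 0 < #(lowCrossers w i)))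
  have hg₁ := min'_mem _ (card_pos.1 (by omega : 0 < #(highCrossers w i)))
  have hg₂ := max'_mem _ (card_pos.1 (by omega : 0 < #(highCrossers w i)))
  have hl₁' := mem_lowCrossers.1 hl₁
  have hl₂' := mem_lowCrossers.1 hl₂
  have hg₁' := mem_highCrossers.1 hg₁
  rcases lt_or_gt_of_ne (w⁻¹.injective.ne hg.ne) with hgpos | hgpos
  · rcases lt_or_gt_of_ne (w⁻¹.injective.ne hl.ne) with hlpos | hlpos
    · exact Or.inr (straddles3412_of_mem hw hl₁ hl₂ hg₁ hg₂ hl hg hlpos hgpos)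
    · exact Or.inl (straddles321_of_mem hw hl₁ hg₁ hl (by omega) (by omega) hlpos)
  · exact Or.inl (straddles321_of_mem hw hl₁ hg₂ (by omega) hg hgpos (by omega))

lemma two_le_card_highCrossers_of_straddles3412 (h : Straddles3412 n w i) :
    2 ≤ #(highCrossers w i) := by
  obtain ⟨x₁, x₂, x₃, x₄, -, h₁₂, -, -, -, hx₂, -, -, -, hv₁₂, -, hv₁⟩ := h
  have hsub : {w x₁, w x₂} ⊆ highCrossers w i := by
    intro v hv
    rw [mem_insert, mem_singleton] at hv
    rcases hv with rfl | rfl <;> simp <;> omega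
  exact (card_pair hv₁₂.ne).symm.trans_le (card_le_card hsub)

end Patterns

section Repetition

variable {n i : ℕ} {w : Equiv.Perm ℕ}

lemma mem_crossers_of_first_occurrence (hw : MemSymm n w) {p r : List ℕ}
    (hs : IsReducedWord n w (p ++ i :: r)) (hp : i ∉ p) (h321 : ¬ Straddles321 n w i) :
    wordProd p i ∈ lowCrossers w i ∧ wordProd p (i + 1) ∈ highCrossers w i := by
  have hu := memSymm_wordProd fun m hm => hs.1.1 m (List.mem_append_left _ hm)
  obtain ⟨hab, hsub⟩ := hs.mem_inversions_of_eq_append hw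
  set u := wordProd p
  have hleft : ∀ z, u⁻¹ z ≤ i ↔ z ≤ i := wordProd_inv_apply_le_iff_of_notMem hp
  rw [hw.mem_inversions_iff] at hab
  have hua : u⁻¹ (u i) = i := by simp
  have hub : u⁻¹ (u (i + 1)) = i + 1 := by simp
  -- `u` keeps the values `≤ i` in the positions `≤ i`, so `u i` is the last of them.
  have ha : u i ≤ i := (hleft _).1 (by omega)
  have hb : i < u (i + 1) := by have := hleft (u (i + 1)); omega
  have hbelow : ∀ x ≤ i, u i < x → w⁻¹ x < w⁻¹ (u i) := fun x hx hax => by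
    have hx' : u⁻¹ x ≠ i := by rw [Ne, Equiv.Perm.inv_eq_iff_eq]; omega
    have := (hleft x).2 hx
    exact (hw.mem_inversions_iff.1 (hsub (hu.mem_inversions_iff.2 ⟨hax, by omega⟩))).2
  have habove : ∀ y, i < y → y < u (i + 1) → w⁻¹ (u (i + 1)) < w⁻¹ y := fun y hy hyb => by
    have hy' : u⁻¹ y ≠ i + 1 := by rw [Ne, Equiv.Perm.inv_eq_iff_eq]; omega
    have := (hleft y).not.2 (by omega)
    exact (hw.mem_inversions_iff.1 (hsub (hu.mem_inversions_iff.2 ⟨hyb, by omega⟩))).2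
  have haL : u i ∈ lowCrossers w i := by
    refine mem_lowCrossers.2 ⟨ha, not_le.1 fun hwa => ?_⟩
    have hbH : u (i + 1) ∈ highCrossers w i := mem_highCrossers.2 ⟨hb, by omega⟩
    obtain ⟨α, hα⟩ := lowCrossers_nonempty_iff.2 ⟨_, hbH⟩
    have hα' := mem_lowCrossers.1 hα
    rcases lt_or_gt_of_ne (show α ≠ u i by rintro rfl; omega) with hαa | hαa
    · exact h321 (straddles321_of_mem hw hα hbH hαa hab.1 hab.2 (by omega))
    · have := hbelow α hα'.1 hαa
      omega
  refine ⟨haL, mem_highCrossers.2 ⟨hb, not_lt.1 fun hwb => ?_⟩⟩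
  obtain ⟨β, hβ⟩ := lowCrossers_nonempty_iff.1 ⟨_, haL⟩
  have hβ' := mem_highCrossers.1 hβ
  rcases lt_or_gt_of_ne (show u (i + 1) ≠ β by rintro rfl; omega) with hbβ | hbβ
  · exact h321 (straddles321_of_mem hw haL hβ hab.1 hbβ (by omega) hab.2)
  · have := habove β hβ'.1 hbβ
    omega

lemma two_le_card_lowCrossers_of_two_le_count (hw : MemSymm n w) {s : List ℕ}
    (hs : IsReducedWord n w s) (hcount : 2 ≤ s.count i) (h321 : ¬ Straddles321 n w i) :
    2 ≤ #(lowCrossers w i) := by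
  by_contra! hle
  obtain ⟨p, r₀, rfl, hp⟩ :=
    List.eq_append_cons_of_mem (List.count_pos_iff.1 (by omega : 0 < s.count i))
  have hr₀ : 0 < r₀.count i := by
    simp only [List.count_append, List.count_cons_self, List.count_eq_zero.2 hp] at hcount
    omega
  obtain ⟨p', r, rfl, hp'⟩ := List.eq_append_cons_of_mem (List.count_pos_iff.1 hr₀)
  obtain ⟨haL, hbH⟩ := mem_crossers_of_first_occurrence hw hs hp h321
  obtain ⟨hL, hH⟩ := crossers_eq_singleton_of_card_le_one haL hbH (by omega)
  have hs' : IsReducedWord n w ((p ++ i :: p') ++ i :: r) := by simpa using hs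
  obtain ⟨hce, -⟩ := hs'.mem_inversions_of_eq_append hw
  set v := wordProd (p ++ i :: p')
  have hsame : ∀ z, v⁻¹ z ≤ i ↔ w⁻¹ z ≤ i := fun z => by
    rw [wordProd_append_cons_inv_apply_le_iff hp hp', inv_apply_le_iff_of_crossers_eq hL hH]
  have hc := (hsame (v i)).1 (by simp)
  have he := (hsame (v (i + 1))).not.1 (by simp)
  have := (hw.mem_inversions_iff.1 hce).2
  omega

end Repetition

/-- Sorting by this key lists `F` in the order of `w`, then `y₁`, then `y₂`, then all remaining
values in the order of `w`. -/
def frontKey (n : ℕ) (w : Equiv.Perm ℕ) (F : Finset ℕ) (y₁ y₂ x : ℕ) : ℕ :=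
  if x ∈ F then w⁻¹ x else if x = y₁ then n + 1 else if x = y₂ then n + 2 else n + 2 + w⁻¹ x

section Construction

variable {n i : ℕ} {w : Equiv.Perm ℕ}

lemma filter_frontKey_le (hw : MemSymm n w) {F : Finset ℕ} {y₁ y₂ : ℕ} (hF : F ⊆ Icc 1 n)
    (hy₁ : y₁ ∈ Icc 1 n) (hy₂ : y₂ ∈ Icc 1 n) (hy₁F : y₁ ∉ F) (hne : y₁ ≠ y₂) :
    {x ∈ Icc 1 n | frontKey n w F y₁ y₂ x ≤ n + 1} = insert y₁ F ∧
      {x ∈ Icc 1 n | frontKey n w F y₁ y₂ x ≤ n + 2} = insert y₂ (insert y₁ F) := by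
  have hkey : ∀ x ∈ Icc 1 n, (frontKey n w F y₁ y₂ x ≤ n + 1 ↔ x = y₁ ∨ x ∈ F) ∧
      (frontKey n w F y₁ y₂ x ≤ n + 2 ↔ x = y₂ ∨ x = y₁ ∨ x ∈ F) := by
    intro x hx
    have := hw.inv_apply_bounds hx
    by_cases hxF : x ∈ F
    · simp only [frontKey, hxF, if_true, or_true, iff_true]
      omega
    · simp only [frontKey, hxF, if_false, or_false]
      split_ifs <;> omega
  have hins : ∀ x ∈ insert y₂ (insert y₁ F), x ∈ Icc 1 n := by
    simp only [mem_insert]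
    rintro x (rfl | rfl | hx)
    exacts [hy₂, hy₁, hF hx]
  constructor <;> ext x <;> simp only [mem_filter, mem_insert] <;> constructor
  · exact fun ⟨hx, hk⟩ => ((hkey x hx).1).1 hk
  · intro h
    have hx := hins x (by simp only [mem_insert]; tauto)
    exact ⟨hx, ((hkey x hx).1).2 h⟩
  · exact fun ⟨hx, hk⟩ => ((hkey x hx).2).1 hk
  · intro h
    have hx := hins x (by simpa only [mem_insert])
    exact ⟨hx, ((hkey x hx).2).2 h⟩

lemma exists_isSortedBy_frontKey (hw : MemSymm n w) {F : Finset ℕ} {y₁ y₂ : ℕ}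
    (hF : F ⊆ Icc 1 n) (hy₁ : y₁ ∈ Icc 1 n) (hy₂ : y₂ ∈ Icc 1 n) (hy₁F : y₁ ∉ F)
    (hy₂F : y₂ ∉ F) (hne : y₁ ≠ y₂) (hcard : #F + 1 = i) :
    ∃ u, MemSymm n u ∧ IsSortedBy n u (frontKey n w F y₁ y₂) ∧ u i = y₁ ∧ u (i + 1) = y₂ := by
  have hinj : Set.InjOn (frontKey n w F y₁ y₂) (Icc 1 n) := by
    intro x hx y hy hxy
    have := hw.inv_apply_bounds hx
    have := hw.inv_apply_bounds hy
    simp only [frontKey] at hxy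
    split_ifs at hxy <;> first | omega | exact w⁻¹.injective (by omega)
  obtain ⟨u, hu, hsort⟩ := exists_isSortedBy hinj
  obtain ⟨h₁, h₂⟩ := filter_frontKey_le hw hF hy₁ hy₂ hy₁F hne
  have hkey₁ : frontKey n w F y₁ y₂ y₁ = n + 1 := by simp [frontKey, hy₁F]
  have hkey₂ : frontKey n w F y₁ y₂ y₂ = n + 2 := by simp [frontKey, hy₂F, hne.symm]
  refine ⟨u, hu, hsort, ?_, ?_⟩ <;> rw [eq_comm, ← Equiv.Perm.inv_eq_iff_eq, ← hcard]
  · rw [hsort.inv_apply_eq_card hu hy₁, hkey₁, h₁, card_insert_of_notMem hy₁F]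
  · rw [hsort.inv_apply_eq_card hu hy₂, hkey₂, h₂, card_insert_of_notMem (by simp [hne.symm, hy₂F]),
      card_insert_of_notMem hy₁F]

lemma MemSymm.bounds_of_crossers_eq (hw : MemSymm n w) {α β : ℕ} (hL : lowCrossers w i = {α})
    (hH : highCrossers w i = {β}) : 1 ≤ α ∧ α ≤ i ∧ i < w⁻¹ α ∧ i < β ∧ β ≤ n ∧ w⁻¹ β ≤ i := by
  have hα := mem_lowCrossers.1 (hL ▸ mem_singleton_self α)
  have hβ := mem_highCrossers.1 (hH ▸ mem_singleton_self β)
  have hαI := (hw.mem_Icc_of_inv_apply_ne (z := α) (by omega)).1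
  have hβI := (hw.mem_Icc_of_inv_apply_ne (z := β) (by omega)).1
  simp only [mem_Icc] at hαI hβI
  omega

lemma exists_isReducedWord_two_le_count_of_chain (hw : MemSymm n w) (hi : 1 ≤ i) (hin : i < n)
    {u₁ u₂ : Equiv.Perm ℕ} (hu₁ : MemSymm n u₁) (hu₂ : MemSymm n u₂)
    (h₁ : (u₁ i, u₁ (i + 1)) ∈ inversions n u₂) (h₁₂ : inversions n u₁ ⊆ inversions n u₂)
    (h₂ : (u₂ i, u₂ (i + 1)) ∈ inversions n w) (h₂w : inversions n u₂ ⊆ inversions n w) :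
    ∃ s, IsReducedWord n w s ∧ 2 ≤ s.count i := by
  have step : ∀ {u v : Equiv.Perm ℕ}, MemSymm n u → MemSymm n v →
      (u i, u (i + 1)) ∈ inversions n v → inversions n u ⊆ inversions n v →
      ∃ t : List ℕ, (∀ j ∈ t, 1 ≤ j ∧ j ≤ n - 1) ∧ u * sigmaT i * wordProd t = v ∧
        #(inversions n u) + 1 + t.length = #(inversions n v) := by
    intro u v hu hv hmem hsub
    have hlt := (hv.mem_inversions_iff.1 hmem).1
    rw [← card_inversions_mul_sigmaT hu hi hin hlt]
    refine exists_word_of_inversions_subset (hu.mul (memSymm_sigmaT hi hin)) hv ?_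
    rw [inversions_mul_sigmaT hu hi hin hlt]
    exact insert_subset hmem hsub
  obtain ⟨s₁, hs₁, hp₁, hl₁⟩ :=
    exists_word_of_inversions_subset MemSymm.one hu₁ (by simp [inversions_one])
  obtain ⟨s₂, hs₂, hp₂, hl₂⟩ := step hu₁ hu₂ h₁ h₁₂
  obtain ⟨s₃, hs₃, hp₃, hl₃⟩ := step hu₂ hw h₂ h₂w
  rw [one_mul] at hp₁
  rw [inversions_one, card_empty, zero_add] at hl₁
  refine ⟨s₁ ++ i :: (s₂ ++ i :: s₃), (isReducedWord_iff hw).2 ⟨⟨?_, ?_⟩, ?_⟩, ?_⟩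
  · have hi' : 1 ≤ i ∧ i ≤ n - 1 := ⟨hi, by omega⟩
    simp only [List.mem_append, List.mem_cons]
    rintro j (h | rfl | h | rfl | h)
    exacts [hs₁ j h, hi', hs₂ j h, hi', hs₃ j h]
  · rw [wordProd_append, wordProd_cons, wordProd_append, wordProd_cons, hp₁, ← hp₃, ← hp₂]
    simp only [mul_assoc]
  · simp only [List.length_append, List.length_cons]
    omega
  · simp only [List.count_append, List.count_cons_self]
    omega

lemma exists_isReducedWord_two_le_count_of_low_middle (hw : MemSymm n w) {α β q : ℕ}
    (hL : lowCrossers w i = {α}) (hH : highCrossers w i = {β}) (hqi : q ≤ i) (hαq : α < q)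
    (hβq : w⁻¹ β < w⁻¹ q) (hqα : w⁻¹ q < w⁻¹ α)
    (hmax : ∀ y, q < y → y ≤ i → w⁻¹ y < w⁻¹ q) :
    ∃ s, IsReducedWord n w s ∧ 2 ≤ s.count i := by
  obtain ⟨hα₁, hαi, hαpos, hβi, hβn, hβpos⟩ := hw.bounds_of_crossers_eq hL hH
  have facts : ∀ z ∈ Icc 1 n, (1 ≤ w⁻¹ z ∧ w⁻¹ z ≤ n) ∧
      (w⁻¹ z ≤ i ↔ (z ≤ i ∧ z ≠ α) ∨ z = β) ∧ (z ≤ q ∨ i < z ∨ w⁻¹ z < w⁻¹ q) := fun z hz => by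
    refine ⟨hw.inv_apply_bounds hz, inv_apply_le_iff_of_crossers_eq hL hH, ?_⟩
    by_cases h : q < z ∧ z ≤ i
    · exact Or.inr (Or.inr (hmax z h.1 h.2))
    · omega
  obtain ⟨u₁, hu₁, hs₁, hu₁q, hu₁β⟩ := exists_isSortedBy_frontKey (i := i) hw
    (F := (Icc 1 i).erase q) (y₁ := q) (y₂ := β)
    (fun x hx => by simp only [mem_erase, mem_Icc] at hx ⊢; omega)
    (by simp only [mem_Icc]; omega) (by simp only [mem_Icc]; omega)
    (by simp only [mem_erase, mem_Icc]; omega) (by simp only [mem_erase, mem_Icc]; omega)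
    (by omega) (by rw [card_erase_of_mem (by simp only [mem_Icc]; omega), Nat.card_Icc]; omega)
  obtain ⟨u₂, hu₂, hs₂, hu₂α, hu₂q⟩ := exists_isSortedBy_frontKey (i := i) hw
    (F := insert β (((Icc 1 i).erase α).erase q)) (y₁ := α) (y₂ := q)
    (fun x hx => by simp only [mem_insert, mem_erase, mem_Icc] at hx ⊢; omega)
    (by simp only [mem_Icc]; omega) (by simp only [mem_Icc]; omega)
    (by simp only [mem_insert, mem_erase, mem_Icc]; omega)
    (by simp only [mem_insert, mem_erase, mem_Icc]; omega) (by omega)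
    (by rw [card_insert_of_notMem (by simp only [mem_erase, mem_Icc]; omega),
      card_erase_of_mem (by simp only [mem_erase, mem_Icc]; omega),
      card_erase_of_mem (by simp only [mem_Icc]; omega), Nat.card_Icc]; omega)
  refine exists_isReducedWord_two_le_count_of_chain hw (by omega) (by omega) hu₁ hu₂ ?pair₁
    (inversions_subset_of_isSortedBy hs₁ hs₂ ?keys₁₂) ?pair₂
    (inversions_subset_of_isSortedBy hs₂ (isSortedBy_inv w) ?keys₂)
  case pair₁ =>
    rw [hu₁q, hu₁β, mem_inversions_of_isSortedBy hs₂]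
    refine ⟨by simp only [mem_Icc]; omega, by simp only [mem_Icc]; omega, by omega, ?_⟩
    simp only [frontKey, mem_insert, mem_erase, mem_Icc, true_or, if_true]
    split_ifs <;> omega
  case pair₂ => exact hu₂α ▸ hu₂q ▸ hw.mem_inversions_iff.2 ⟨hαq, hqα⟩
  all_goals
    intro x hx y hy hxy
    obtain ⟨hx₁, hx₂, hx₃⟩ := facts x hx
    obtain ⟨hy₁, hy₂, hy₃⟩ := facts y hy
    simp only [mem_Icc] at hx hy
    simp only [frontKey, mem_insert, mem_erase, mem_Icc]
    split_ifs <;> first | omega | grind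

lemma exists_isReducedWord_two_le_count_of_high_middle (hw : MemSymm n w) {α β q : ℕ}
    (hL : lowCrossers w i = {α}) (hH : highCrossers w i = {β}) (hiq : i < q) (hqβ : q < β)
    (hβq : w⁻¹ β < w⁻¹ q) (hqα : w⁻¹ q < w⁻¹ α)
    (hmin : ∀ y, i < y → y < q → w⁻¹ q < w⁻¹ y) :
    ∃ s, IsReducedWord n w s ∧ 2 ≤ s.count i := by
  obtain ⟨hα₁, hαi, hαpos, hβi, hβn, hβpos⟩ := hw.bounds_of_crossers_eq hL hH
  have facts : ∀ z ∈ Icc 1 n, (1 ≤ w⁻¹ z ∧ w⁻¹ z ≤ n) ∧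
      (w⁻¹ z ≤ i ↔ (z ≤ i ∧ z ≠ α) ∨ z = β) ∧ (z ≤ i ∨ q ≤ z ∨ w⁻¹ q < w⁻¹ z) := fun z hz => by
    refine ⟨hw.inv_apply_bounds hz, inv_apply_le_iff_of_crossers_eq hL hH, ?_⟩
    by_cases h : i < z ∧ z < q
    · exact Or.inr (Or.inr (hmin z h.1 h.2))
    · omega
  have hF : (Icc 1 i).erase α ⊆ Icc 1 n := fun x hx => by
    simp only [mem_erase, mem_Icc] at hx ⊢
    omega
  have hcard : #((Icc 1 i).erase α) + 1 = i := by
    rw [card_erase_of_mem (by simp only [mem_Icc]; omega), Nat.card_Icc]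
    omega
  obtain ⟨u₁, hu₁, hs₁, hu₁α, hu₁q⟩ := exists_isSortedBy_frontKey (i := i) hw (y₁ := α) (y₂ := q)
    hF (by simp only [mem_Icc]; omega) (by simp only [mem_Icc]; omega)
    (by simp only [mem_erase, mem_Icc]; omega) (by simp only [mem_erase, mem_Icc]; omega)
    (by omega) hcard
  obtain ⟨u₂, hu₂, hs₂, hu₂q, hu₂β⟩ := exists_isSortedBy_frontKey (i := i) hw (y₁ := q) (y₂ := β)
    hF (by simp only [mem_Icc]; omega) (by simp only [mem_Icc]; omega)
    (by simp only [mem_erase, mem_Icc]; omega) (by simp only [mem_erase, mem_Icc]; omega)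
    (by omega) hcard
  refine exists_isReducedWord_two_le_count_of_chain hw (by omega) (by omega) hu₁ hu₂ ?pair₁
    (inversions_subset_of_isSortedBy hs₁ hs₂ ?keys₁₂) ?pair₂
    (inversions_subset_of_isSortedBy hs₂ (isSortedBy_inv w) ?keys₂)
  case pair₁ =>
    rw [hu₁α, hu₁q, mem_inversions_of_isSortedBy hs₂]
    refine ⟨by simp only [mem_Icc]; omega, by simp only [mem_Icc]; omega, by omega, ?_⟩
    simp only [frontKey, mem_erase, mem_Icc]
    split_ifs <;> omega
  case pair₂ => exact hu₂q ▸ hu₂β ▸ hw.mem_inversions_iff.2 ⟨hqβ, hβq⟩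
  all_goals
    intro x hx y hy hxy
    obtain ⟨hx₁, hx₂, hx₃⟩ := facts x hx
    obtain ⟨hy₁, hy₂, hy₃⟩ := facts y hy
    simp only [mem_Icc] at hx hy
    simp only [frontKey, mem_erase, mem_Icc]
    split_ifs <;> first | omega | grind

lemma exists_isReducedWord_two_le_count_of_middle (hw : MemSymm n w) {α β m : ℕ}
    (hL : lowCrossers w i = {α}) (hH : highCrossers w i = {β}) (hαm : α < m) (hmβ : m < β)
    (hβm : w⁻¹ β < w⁻¹ m) (hmα : w⁻¹ m < w⁻¹ α) :
    ∃ s, IsReducedWord n w s ∧ 2 ≤ s.count i := by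
  obtain ⟨-, hαi, hαpos, hβi, -, hβpos⟩ := hw.bounds_of_crossers_eq hL hH
  have hside : ∀ z, w⁻¹ z ≤ i ↔ (z ≤ i ∧ z ≠ α) ∨ z = β := fun z =>
    inv_apply_le_iff_of_crossers_eq hL hH
  set M := (range β).filter fun z => α < z ∧ w⁻¹ β < w⁻¹ z ∧ w⁻¹ z < w⁻¹ α
  have hM : ∀ z, z ∈ M ↔ z < β ∧ α < z ∧ w⁻¹ β < w⁻¹ z ∧ w⁻¹ z < w⁻¹ α := by simp [M]
  by_cases hlow : (M.filter (· ≤ i)).Nonempty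
  · obtain ⟨q, hqM, hqmax⟩ := exists_max_image _ (⇑w⁻¹) hlow
    rw [mem_filter, hM] at hqM
    refine exists_isReducedWord_two_le_count_of_low_middle hw hL hH hqM.2 hqM.1.2.1
      hqM.1.2.2.1 hqM.1.2.2.2 fun y hqy hyi => ?_
    have hne : w⁻¹ y ≠ w⁻¹ q := w⁻¹.injective.ne (by omega)
    have := hside y
    by_contra! hle
    have := hqmax y (by rw [mem_filter, hM]; omega)
    omega
  · obtain ⟨q, hqM, hqmin⟩ := exists_min_image M (⇑w⁻¹) ⟨m, (hM m).2 ⟨hmβ, hαm, hβm, hmα⟩⟩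
    rw [hM] at hqM
    have hiq : i < q := by
      by_contra h
      exact hlow ⟨q, mem_filter.2 ⟨(hM q).2 hqM, by omega⟩⟩
    refine exists_isReducedWord_two_le_count_of_high_middle hw hL hH hiq hqM.1 hqM.2.2.1
      hqM.2.2.2 fun y hiy hyq => ?_
    have hne : w⁻¹ y ≠ w⁻¹ q := w⁻¹.injective.ne (by omega)
    have := hside y
    by_contra! hle
    have := hqmin y ((hM y).2 (by omega))
    omega

lemma exists_isReducedWord_two_le_count_of_straddles321 (hw : MemSymm n w)
    (h : Straddles321 n w i) : ∃ s, IsReducedWord n w s ∧ 2 ≤ s.count i := by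
  obtain ⟨s, hs⟩ := exists_isReducedWord hw
  by_cases hc : 2 ≤ #(lowCrossers w i)
  · exact ⟨s, hs, hc.trans (hs.1.2 ▸ card_lowCrossers_le_count s)⟩
  obtain ⟨x₁, x₂, x₃, -, h₁₂, h₂₃, -, hx₁, hx₃, hv₃₂, hv₂₁, hv₃, hv₁⟩ := h
  have hα : w x₃ ∈ lowCrossers w i := mem_lowCrossers.2 ⟨hv₃, by simpa using hx₃⟩
  have hβ : w x₁ ∈ highCrossers w i := mem_highCrossers.2 ⟨hv₁, by simpa using hx₁⟩
  obtain ⟨hL, hH⟩ := crossers_eq_singleton_of_card_le_one hα hβ (by omega)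
  exact exists_isReducedWord_two_le_count_of_middle hw hL hH hv₃₂ hv₂₁ (by simpa using h₁₂)
    (by simpa using h₂₃)

end Construction

/-- support range: i appears exactly once in every reduced word of w iff
w has no straddling 321-pattern and no straddling 3412-pattern. -/
theorem support_range (n : ℕ) (w : Equiv.Perm ℕ) (hw : MemSymm n w) (i : ℕ)
    (hi : i ∈ supp n w) :
    (∀ s : List ℕ, IsReducedWord n w s → s.count i = 1) ↔
      (¬(∃ x1 x2 x3 : ℕ, 1 ≤ x1 ∧ x1 < x2 ∧ x2 < x3 ∧ x3 ≤ n ∧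
           x1 ≤ i ∧ i < x3 ∧
           w x3 < w x2 ∧ w x2 < w x1 ∧ w x3 ≤ i ∧ i < w x1) ∧
       ¬(∃ x1 x2 x3 x4 : ℕ, 1 ≤ x1 ∧ x1 < x2 ∧ x2 < x3 ∧ x3 < x4 ∧ x4 ≤ n ∧
           x2 ≤ i ∧ i < x3 ∧
           w x3 < w x4 ∧ w x4 < w x1 ∧ w x1 < w x2 ∧ w x4 ≤ i ∧ i < w x1)) := by
  obtain ⟨s₀, hs₀, hi₀⟩ := hi
  have hcount : ∀ {s}, IsReducedWord n w s → #(lowCrossers w i) ≤ s.count i :=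
    fun hs => hs.1.2 ▸ card_lowCrossers_le_count _
  constructor
  · intro hall
    refine ⟨fun h321 => ?_, fun h3412 => ?_⟩
    · obtain ⟨s, hs, htwo⟩ := exists_isReducedWord_two_le_count_of_straddles321 hw h321
      have := hall s hs
      omega
    · have := two_le_card_highCrossers_of_straddles3412 h3412
      have := card_lowCrossers_eq_card_highCrossers w i
      have := hall s₀ hs₀
      have := hcount hs₀
      omega
  · rintro ⟨h321, h3412⟩
    have hle : ∀ s, IsReducedWord n w s → s.count i ≤ 1 := fun s hs => by
      by_contra! htwo
      exact (straddles_of_two_le_card_lowCrossers hw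
        (two_le_card_lowCrossers_of_two_le_count hw hs htwo h321)).elim h321 h3412
    have hpos : 0 < #(lowCrossers w i) := by
      rw [card_pos, lowCrossers_nonempty_iff, ← hs₀.1.2]
      exact highCrossers_nonempty_of_count_eq_one
        (le_antisymm (hle s₀ hs₀) (List.count_pos_iff.2 hi₀))
    intro s hs
    have := hle s hs
    have := hcount hs
    omega
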